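/- For all real numbers t < T, x, k and all λ in (max(e^x − e^k, 0), e^x), if Θ = BS^{−1}(t,T,x,k,λ) satisfies the zero-vanna condition d2(t,T,x,k,Θ) = 0 (equivalently x − k = Θ²(T−t)/2), then the third derivative of the inverse Black–Scholes map equals exactly (BS^{−1})‴(t,T,x,k,λ) = (2π)^{3/2} e^{−3x} e^{(3/2)Θ²(T−t)} (T−t)^{−1/2}. -/

import Mathlib

/-! The inverse `g` of `σ ↦ BS σ` satisfies `g' = 1 / ν(g)` with `ν` the vega, so
`g''' = (3 ν'(g)² - ν(g) ν''(g)) / ν(g)⁵`. Since `d₁' = -d₂ / σ` and `d₂' = -d₁ / σ`, the volga is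
`ν' = ν d₁ d₂ / σ`. Under zero vanna `d₂ = 0` it vanishes, `d₁ = σ √(T - t)`, and its derivative
reduces to `ν d₁ d₂' / σ = -ν (T - t)`. Hence `g''' = (T - t) / ν³`, and
`ν = e^x φ(Θ √(T - t)) √(T - t)` gives the closed form. -/

noncomputable section

/-- Standard normal density. -/
def phi (z : ℝ) : ℝ := (Real.sqrt (2 * Real.pi))⁻¹ * Real.exp (-z ^ 2 / 2)

/-- Standard normal cumulative distribution function. -/
def N (y : ℝ) : ℝ := ∫ z in Set.Iic y, phi z

/-- Black–Scholes auxiliary quantity `d₁`. -/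
def d1 (t T x k σ : ℝ) : ℝ :=
  (x - k) / (σ * Real.sqrt (T - t)) + σ * Real.sqrt (T - t) / 2

/-- Black–Scholes auxiliary quantity `d₂`. -/
def d2 (t T x k σ : ℝ) : ℝ :=
  (x - k) / (σ * Real.sqrt (T - t)) - σ * Real.sqrt (T - t) / 2

/-- Black–Scholes call price with log-spot `x`, log-strike `k`,
time to maturity `T - t` and volatility `σ`. -/
def BS (t T x k σ : ℝ) : ℝ :=
  Real.exp x * N (d1 t T x k σ) - Real.exp k * N (d2 t T x k σ)

/-- Inverse of the Black–Scholes price in the volatility argument on `(0, ∞)`. -/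
def BSinv (t T x k l : ℝ) : ℝ := Function.invFunOn (BS t T x k) (Set.Ioi 0) l

open Real MeasureTheory ProbabilityTheory Set Filter Topology

lemma phi_eq_gaussianPDFReal : phi = gaussianPDFReal 0 1 := by
  ext z
  simp [phi, gaussianPDFReal]

lemma phi_pos (z : ℝ) : 0 < phi z := by
  rw [phi_eq_gaussianPDFReal]
  exact gaussianPDFReal_pos _ _ _ one_ne_zero

lemma phi_le (z : ℝ) : phi z ≤ (√(2 * π))⁻¹ :=
  mul_le_of_le_one_right (by positivity) (exp_le_one_iff.2 (by nlinarith [sq_nonneg z]))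

lemma continuous_phi : Continuous phi := by
  unfold phi
  fun_prop

lemma integrable_phi : Integrable phi :=
  phi_eq_gaussianPDFReal ▸ integrable_gaussianPDFReal 0 1

lemma hasDerivAt_phi (z : ℝ) : HasDerivAt phi (-(z * phi z)) z := by
  have h : HasDerivAt (fun y => -y ^ 2 / 2) (-z) z := by
    refine ((hasDerivAt_pow 2 z).fun_neg.div_const 2).congr_deriv ?_
    ring
  refine (h.exp.const_mul (√(2 * π))⁻¹).congr_deriv ?_
  rw [phi]
  ring

lemma N_eq_cdf_gaussianReal : N = cdf (gaussianReal 0 1) := by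
  ext y
  rw [cdf_eq_real, measureReal_def, gaussianReal_apply_eq_integral _ one_ne_zero,
    ENNReal.toReal_ofReal (integral_nonneg fun z => gaussianPDFReal_nonneg _ _ z),
    ← phi_eq_gaussianPDFReal, N]

lemma N_nonneg (y : ℝ) : 0 ≤ N y :=
  N_eq_cdf_gaussianReal ▸ cdf_nonneg _ y

lemma N_le_one (y : ℝ) : N y ≤ 1 :=
  N_eq_cdf_gaussianReal ▸ cdf_le_one _ y

lemma tendsto_N_atTop : Tendsto N atTop (𝓝 1) :=
  N_eq_cdf_gaussianReal ▸ tendsto_cdf_atTop _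

lemma tendsto_N_atBot : Tendsto N atBot (𝓝 0) :=
  N_eq_cdf_gaussianReal ▸ tendsto_cdf_atBot _

lemma N_sub_N_eq_integral (a b : ℝ) : N b - N a = ∫ z in a..b, phi z :=
  intervalIntegral.integral_Iic_sub_Iic integrable_phi.integrableOn integrable_phi.integrableOn

lemma hasStrictDerivAt_N (y : ℝ) : HasStrictDerivAt N (phi y) y := by
  have hN : N = fun u => N 0 + ∫ z in (0 : ℝ)..u, phi z := by
    ext u
    rw [← N_sub_N_eq_integral]
    ring
  rw [hN]
  exact (intervalIntegral.integral_hasStrictDerivAt_right integrable_phi.intervalIntegrable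
    (continuous_phi.stronglyMeasurableAtFilter _ _) continuous_phi.continuousAt).const_add _

lemma N_sub_N_le {a b : ℝ} (hab : a ≤ b) : N b - N a ≤ (√(2 * π))⁻¹ * (b - a) := by
  rw [N_sub_N_eq_integral]
  calc ∫ z in a..b, phi z ≤ ∫ _ in a..b, (√(2 * π))⁻¹ :=
        intervalIntegral.integral_mono_on hab integrable_phi.intervalIntegrable
          intervalIntegrable_const fun z _ => phi_le z
    _ = (√(2 * π))⁻¹ * (b - a) := by
        rw [intervalIntegral.integral_const, smul_eq_mul, mul_comm]

theorem iteratedDeriv_three_of_hasDerivAt_inv_comp {g f₁ f₂ : ℝ → ℝ} {f₃ l : ℝ}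
    (hg : ∀ᶠ q in 𝓝 l, HasDerivAt g (f₁ (g q))⁻¹ q)
    (hf₁ : ∀ᶠ q in 𝓝 l, HasDerivAt f₁ (f₂ (g q)) (g q))
    (hf₂ : HasDerivAt f₂ f₃ (g l)) (h₀ : f₁ (g l) ≠ 0) :
    iteratedDeriv 3 g l = (3 * f₂ (g l) ^ 2 - f₁ (g l) * f₃) / f₁ (g l) ^ 5 := by
  have hne : ∀ᶠ q in 𝓝 l, f₁ (g q) ≠ 0 :=
    (hf₁.self_of_nhds.comp l hg.self_of_nhds).continuousAt.eventually_ne h₀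
  have hinv : ∀ᶠ q in 𝓝 l,
      HasDerivAt (fun q => (f₁ (g q))⁻¹) (-f₂ (g q) * (f₁ (g q))⁻¹ ^ 3) q := by
    filter_upwards [hg, hf₁, hne] with q hgq hf₁q hneq
    refine ((hf₁q.comp q hgq).fun_inv hneq).congr_deriv ?_
    simp only [Function.comp_apply]
    field_simp
  have hd₁ : deriv g =ᶠ[𝓝 l] fun q => (f₁ (g q))⁻¹ := hg.mono fun q h => h.deriv
  have hd₂ : deriv (deriv g) =ᶠ[𝓝 l] fun q => -f₂ (g q) * (f₁ (g q))⁻¹ ^ 3 := by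
    filter_upwards [hd₁.eventuallyEq_nhds, hinv] with q hq hinvq
    rw [hq.deriv_eq, hinvq.deriv]
  have hd₃ := (hf₂.comp l hg.self_of_nhds).fun_neg.fun_mul (hinv.self_of_nhds.fun_pow 3)
  rw [iteratedDeriv_eq_iterate, Function.iterate_succ_apply', Function.iterate_succ_apply',
    Function.iterate_one, hd₂.deriv_eq]
  refine hd₃.deriv.trans ?_
  simp only [Function.comp_apply]
  norm_num
  field_simp
  ring

section BlackScholes

variable {t T x k σ l : ℝ}

lemma d1_eq (t T x k σ : ℝ) :
    d1 t T x k σ = (x - k) / √(T - t) * σ⁻¹ + √(T - t) / 2 * σ := by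
  rw [d1, mul_comm σ, ← div_div, div_eq_mul_inv _ σ]
  ring

lemma d2_eq (t T x k σ : ℝ) :
    d2 t T x k σ = (x - k) / √(T - t) * σ⁻¹ - √(T - t) / 2 * σ := by
  rw [d2, mul_comm σ, ← div_div, div_eq_mul_inv _ σ]
  ring

lemma d1_sub_d2 (t T x k σ : ℝ) : d1 t T x k σ - d2 t T x k σ = σ * √(T - t) := by
  rw [d1, d2]
  ring

lemma hasStrictDerivAt_d1 (hσ : σ ≠ 0) :
    HasStrictDerivAt (d1 t T x k) (-d2 t T x k σ / σ) σ := by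
  have h := ((hasStrictDerivAt_inv hσ).const_mul ((x - k) / √(T - t))).add
    ((hasStrictDerivAt_id σ).const_mul (√(T - t) / 2))
  rw [funext (d1_eq t T x k), d2_eq]
  refine h.congr_deriv ?_
  field_simp
  ring

lemma hasStrictDerivAt_d2 (hσ : σ ≠ 0) :
    HasStrictDerivAt (d2 t T x k) (-d1 t T x k σ / σ) σ := by
  have h := ((hasStrictDerivAt_inv hσ).const_mul ((x - k) / √(T - t))).sub
    ((hasStrictDerivAt_id σ).const_mul (√(T - t) / 2))
  rw [funext (d2_eq t T x k), d1_eq]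
  refine h.congr_deriv ?_
  field_simp
  ring

lemma exp_mul_phi_d2 (hτ : 0 < T - t) (hσ : σ ≠ 0) :
    exp k * phi (d2 t T x k σ) = exp x * phi (d1 t T x k σ) := by
  have hs : √(T - t) ≠ 0 := (sqrt_pos.2 hτ).ne'
  have hsq : d1 t T x k σ ^ 2 - d2 t T x k σ ^ 2 = 2 * (x - k) := by
    rw [d1, d2]
    field_simp
    ring
  simp only [phi, mul_left_comm (exp _), ← exp_add]
  congr 2
  linarith

def vega (t T x k σ : ℝ) : ℝ := exp x * phi (d1 t T x k σ) * √(T - t)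

def volga (t T x k σ : ℝ) : ℝ := vega t T x k σ * d1 t T x k σ * d2 t T x k σ / σ

lemma vega_pos (hτ : 0 < T - t) : 0 < vega t T x k σ :=
  mul_pos (mul_pos (exp_pos x) (phi_pos _)) (sqrt_pos.2 hτ)

lemma hasStrictDerivAt_BS (hτ : 0 < T - t) (hσ : σ ≠ 0) :
    HasStrictDerivAt (BS t T x k) (vega t T x k σ) σ := by
  have hd1 := hasStrictDerivAt_d1 (t := t) (T := T) (x := x) (k := k) hσ
  have hd2 := hasStrictDerivAt_d2 (t := t) (T := T) (x := x) (k := k) hσ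
  have h := (((hasStrictDerivAt_N _).comp σ hd1).const_mul (exp x)).sub
    (((hasStrictDerivAt_N _).comp σ hd2).const_mul (exp k))
  refine h.congr_deriv ?_
  rw [← mul_assoc (exp k), exp_mul_phi_d2 hτ hσ, vega]
  field_simp
  linear_combination phi (d1 t T x k σ) * d1_sub_d2 t T x k σ

lemma hasDerivAt_vega (hσ : σ ≠ 0) :
    HasDerivAt (vega t T x k) (volga t T x k σ) σ := by
  have hd1 := (hasStrictDerivAt_d1 (t := t) (T := T) (x := x) (k := k) hσ).hasDerivAt
  have h := (((hasDerivAt_phi _).comp σ hd1).const_mul (exp x)).mul_const (√(T - t))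
  refine h.congr_deriv ?_
  rw [volga, vega]
  field_simp

lemma volga_of_d2_eq_zero (h : d2 t T x k σ = 0) : volga t T x k σ = 0 := by
  rw [volga, h, mul_zero, zero_div]

lemma hasDerivAt_volga_of_d2_eq_zero (hτ : 0 ≤ T - t) (hσ : σ ≠ 0) (h : d2 t T x k σ = 0) :
    HasDerivAt (volga t T x k) (-(vega t T x k σ * (T - t))) σ := by
  have hd1 : d1 t T x k σ = σ * √(T - t) := by
    rw [← d1_sub_d2 t T x k σ, h, sub_zero]
  -- In `volga = (vega d₁ / σ) * d₂`, the derivative of the first factor is multiplied by `d₂ = 0`.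
  have hf : DifferentiableAt ℝ (fun σ => vega t T x k σ * d1 t T x k σ / σ) σ :=
    ((hasDerivAt_vega hσ).differentiableAt.mul
      (hasStrictDerivAt_d1 hσ).hasDerivAt.differentiableAt).div differentiableAt_id hσ
  have hd2 := (hasStrictDerivAt_d2 (t := t) (T := T) (x := x) (k := k) hσ).hasDerivAt
  have hmul := hf.hasDerivAt.mul hd2
  have hvolga : volga t T x k = fun σ => vega t T x k σ * d1 t T x k σ / σ * d2 t T x k σ := by
    ext σ
    rw [volga]
    ring
  rw [hvolga]
  refine hmul.congr_deriv ?_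
  rw [h, hd1]
  field_simp
  rw [sq_sqrt hτ]
  ring

lemma continuousOn_BS (hτ : 0 < T - t) : ContinuousOn (BS t T x k) (Ioi 0) := fun _ hσ =>
  (hasStrictDerivAt_BS hτ (ne_of_gt hσ)).hasDerivAt.continuousAt.continuousWithinAt

lemma strictMonoOn_BS (hτ : 0 < T - t) : StrictMonoOn (BS t T x k) (Ioi 0) := by
  refine strictMonoOn_of_deriv_pos (convex_Ioi 0) (continuousOn_BS hτ) fun σ hσ => ?_
  rw [interior_Ioi] at hσ
  rw [(hasStrictDerivAt_BS hτ (ne_of_gt hσ)).hasDerivAt.deriv]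
  exact vega_pos hτ

lemma BS_le_max_add (hσ : 0 ≤ σ) :
    BS t T x k σ ≤ max (exp x - exp k) 0 + exp k * ((√(2 * π))⁻¹ * (σ * √(T - t))) := by
  have hd : d2 t T x k σ ≤ d1 t T x k σ := by
    have := d1_sub_d2 t T x k σ
    nlinarith [sqrt_nonneg (T - t)]
  have hN := d1_sub_d2 t T x k σ ▸ N_sub_N_le hd
  have hintrinsic : (exp x - exp k) * N (d1 t T x k σ) ≤ max (exp x - exp k) 0 := by
    rcases le_total 0 (exp x - exp k) with h | h
    · exact (mul_le_of_le_one_right h (N_le_one _)).trans (le_max_left _ _)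
    · exact (mul_nonpos_of_nonpos_of_nonneg h (N_nonneg _)).trans (le_max_right _ _)
  calc BS t T x k σ
      = (exp x - exp k) * N (d1 t T x k σ) + exp k * (N (d1 t T x k σ) - N (d2 t T x k σ)) := by
        rw [BS]
        ring
    _ ≤ _ := add_le_add hintrinsic (mul_le_mul_of_nonneg_left hN (exp_pos k).le)

lemma tendsto_BS_atTop (hτ : 0 < T - t) : Tendsto (BS t T x k) atTop (𝓝 (exp x)) := by
  have hs : 0 < √(T - t) / 2 := by positivity
  have hinv : Tendsto (fun σ : ℝ => (x - k) / √(T - t) * σ⁻¹) atTop (𝓝 0) := by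
    simpa using tendsto_inv_atTop_zero.const_mul ((x - k) / √(T - t))
  have hd1 : Tendsto (d1 t T x k) atTop atTop := by
    rw [funext (d1_eq t T x k)]
    exact hinv.add_atTop (tendsto_id.const_mul_atTop hs)
  have hd2 : Tendsto (d2 t T x k) atTop atBot := by
    simp only [funext (d2_eq t T x k), sub_eq_add_neg, ← neg_mul]
    exact hinv.add_atBot (tendsto_id.const_mul_atTop_of_neg (neg_lt_zero.2 hs))
  have h := ((tendsto_N_atTop.comp hd1).const_mul (exp x)).sub
    ((tendsto_N_atBot.comp hd2).const_mul (exp k))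
  rw [mul_one, mul_zero, sub_zero] at h
  exact h

lemma exists_BS_eq (hτ : 0 < T - t)
    (hl : l ∈ Ioo (max (exp x - exp k) 0) (exp x)) : ∃ σ ∈ Ioi 0, BS t T x k σ = l := by
  obtain ⟨hlo, hhi⟩ := hl
  set c := exp k * ((√(2 * π))⁻¹ * √(T - t))
  have hc : 0 < c := by positivity
  set a := (l - max (exp x - exp k) 0) / (2 * c)
  have ha : 0 < a := div_pos (sub_pos.2 hlo) (by positivity)
  have hBSa : BS t T x k a < l := by
    have h := BS_le_max_add (t := t) (T := T) (x := x) (k := k) ha.le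
    have hca : exp k * ((√(2 * π))⁻¹ * (a * √(T - t))) = (l - max (exp x - exp k) 0) / 2 := by
      simp only [a, c]
      field_simp
    linarith
  obtain ⟨b, hab, hlb⟩ := ((eventually_ge_atTop a).and
    ((tendsto_BS_atTop hτ).eventually (eventually_gt_nhds hhi))).exists
  have hcont : ContinuousOn (BS t T x k) (Icc a b) :=
    (continuousOn_BS hτ).mono fun σ hσ => ha.trans_le hσ.1
  obtain ⟨σ, hσ, hBSσ⟩ := intermediate_value_Icc hab hcont ⟨hBSa.le, hlb.le⟩
  exact ⟨σ, ha.trans_le hσ.1, hBSσ⟩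

lemma BSinv_pos (hτ : 0 < T - t) (hl : l ∈ Ioo (max (exp x - exp k) 0) (exp x)) :
    0 < BSinv t T x k l :=
  Function.invFunOn_mem (exists_BS_eq hτ hl)

lemma BS_BSinv (hτ : 0 < T - t) (hl : l ∈ Ioo (max (exp x - exp k) 0) (exp x)) :
    BS t T x k (BSinv t T x k l) = l :=
  Function.invFunOn_eq (exists_BS_eq hτ hl)

lemma hasDerivAt_BSinv (hτ : 0 < T - t) (hl : l ∈ Ioo (max (exp x - exp k) 0) (exp x)) :
    HasDerivAt (BSinv t T x k) (vega t T x k (BSinv t T x k l))⁻¹ l := by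
  have hleft : ∀ᶠ σ in 𝓝 (BSinv t T x k l), BSinv t T x k (BS t T x k σ) = σ :=
    (eventually_gt_nhds (BSinv_pos hτ hl)).mono fun σ hσ =>
      (strictMonoOn_BS hτ).injOn.leftInvOn_invFunOn hσ
  have h := (hasStrictDerivAt_BS hτ (BSinv_pos hτ hl).ne').to_local_left_inverse
    (vega_pos hτ).ne' hleft
  rw [BS_BSinv hτ hl] at h
  exact h.hasDerivAt

lemma div_vega_pow_three_of_d2_eq_zero (hτ : 0 < T - t) (h : d2 t T x k σ = 0) :
    (T - t) / vega t T x k σ ^ 3 = (2 * π) ^ ((3 : ℝ) / 2) * exp (-3 * x)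
      * exp (3 / 2 * σ ^ 2 * (T - t)) * (T - t) ^ (-(1 : ℝ) / 2) := by
  have hd1 : d1 t T x k σ = σ * √(T - t) := by
    rw [← d1_sub_d2 t T x k σ, h, sub_zero]
  have hsq : √(T - t) ^ 2 = T - t := sq_sqrt hτ.le
  have h2π : (2 * π) ^ ((3 : ℝ) / 2) = √(2 * π) ^ 3 := by
    rw [sqrt_eq_rpow, ← rpow_natCast, ← rpow_mul (by positivity)]
    norm_num
  have hτ' : (T - t) ^ (-(1 : ℝ) / 2) = (√(T - t))⁻¹ := by
    rw [sqrt_eq_rpow, ← rpow_neg hτ.le, neg_div]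
  have hexp : exp (3 / 2 * σ ^ 2 * (T - t)) * exp (-(σ * √(T - t)) ^ 2 / 2) ^ 3 = 1 := by
    rw [← exp_nat_mul, ← exp_add, mul_pow, hsq, ← exp_zero]
    push_cast
    ring_nf
  have hexp' : exp (-3 * x) * exp x ^ 3 = 1 := by
    rw [← exp_nat_mul, ← exp_add]
    norm_num
  rw [vega, hd1, phi, h2π, hτ', eq_inv_of_mul_eq_one_left hexp',
    eq_inv_of_mul_eq_one_left hexp]
  nth_rewrite 1 [← hsq]
  field_simp

end BlackScholes

theorem bsinv_third_derivative_zero_vanna (t T x k l : ℝ) (htT : t < T)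
    (hl : l ∈ Set.Ioo (max (Real.exp x - Real.exp k) 0) (Real.exp x))
    (hzv : d2 t T x k (BSinv t T x k l) = 0) :
    iteratedDeriv 3 (fun p => BSinv t T x k p) l =
      (2 * Real.pi) ^ ((3 : ℝ) / 2) * Real.exp (-3 * x)
        * Real.exp (3 / 2 * (BSinv t T x k l) ^ 2 * (T - t))
        * (T - t) ^ (-(1 : ℝ) / 2) := by
  have hτ : 0 < T - t := sub_pos.2 htT
  have hnhds : ∀ᶠ q in 𝓝 l, q ∈ Ioo (max (exp x - exp k) 0) (exp x) := isOpen_Ioo.mem_nhds hl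
  have hσ := (BSinv_pos hτ hl).ne'
  rw [iteratedDeriv_three_of_hasDerivAt_inv_comp (f₁ := vega t T x k) (f₂ := volga t T x k)
      (hnhds.mono fun q hq => hasDerivAt_BSinv hτ hq)
      (hnhds.mono fun q hq => hasDerivAt_vega (BSinv_pos hτ hq).ne')
      (hasDerivAt_volga_of_d2_eq_zero hτ.le hσ hzv) (vega_pos hτ).ne',
    volga_of_d2_eq_zero hzv, ← div_vega_pow_three_of_d2_eq_zero hτ hzv]
  field_simp [(vega_pos hτ).ne']
  ring
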